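/- Let (X,d) be a sequentially Yoneda-complete T1 bounded quasi-metric space. Then for all K₁, K₂ ∈ K_0(X), D(K₁*, K₂*) = H_d(K₁, K₂); that is, the map φ(K) = K* is an isometry from (K_0(X), H_d) into (CBX, D). -/

import Mathlib

open scoped NNReal

/-! Generic sequence notions for an arbitrary "distance" function `ρ`. -/

def IsCauchySeq {α : Type _} (ρ : α → α → ℝ) (u : ℕ → α) : Prop :=
  ∀ ε : ℝ, 0 < ε → ∃ N, ∀ n m, N ≤ n → n ≤ m → ρ (u n) (u m) < ε

def IsBiCauchySeq {α : Type _} (ρ : α → α → ℝ) (u : ℕ → α) : Prop :=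
  ∀ ε : ℝ, 0 < ε → ∃ N, ∀ n m, N ≤ n → N ≤ m → ρ (u n) (u m) < ε

/-- `sup_{m ≥ n} ρ (u m) y`. -/
noncomputable def supTail {α : Type _} (ρ : α → α → ℝ) (u : ℕ → α) (y : α) (n : ℕ) : ℝ :=
  sSup {t | ∃ m, n ≤ m ∧ t = ρ (u m) y}

/-- `x` is a Yoneda limit of `u`:  `ρ x y = inf_n sup_{m ≥ n} ρ (u m) y` for all `y`. -/
def IsYonedaLim {α : Type _} (ρ : α → α → ℝ) (u : ℕ → α) (x : α) : Prop :=
  ∀ y, ρ x y = sInf (Set.range (supTail ρ u y))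

def SeqYonedaCompleteD {α : Type _} (ρ : α → α → ℝ) : Prop :=
  ∀ u, IsCauchySeq ρ u → ∃ x, IsYonedaLim ρ u x

/-- Smyth completeness: every Cauchy sequence converges in the symmetrized metric. -/
def SmythCompleteD {α : Type _} (ρ : α → α → ℝ) : Prop :=
  ∀ u, IsCauchySeq ρ u → ∃ x, ∀ ε : ℝ, 0 < ε → ∃ N, ∀ n, N ≤ n →
    max (ρ x (u n)) (ρ (u n) x) < ε

/-- `inf_{m ≥ n} ρ e (u m)`. -/
noncomputable def infTail {α : Type _} (ρ : α → α → ℝ) (u : ℕ → α) (e : α) (n : ℕ) : ℝ :=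
  sInf {t | ∃ m, n ≤ m ∧ t = ρ e (u m)}

/-- `e` is a finite point: for every Cauchy sequence `u` with Yoneda limit `x`,
`ρ e x = sup_n inf_{m ≥ n} ρ e (u m)`. -/
def IsFinitePoint {α : Type _} (ρ : α → α → ℝ) (e : α) : Prop :=
  ∀ u x, IsCauchySeq ρ u → IsYonedaLim ρ u x →
    ρ e x = sSup (Set.range (infTail ρ u e))

/-- ω-algebraic: a countable set of finite points such that every point is a Yoneda limit
of a Cauchy sequence of points from it. -/
def OmegaAlgebraicD {α : Type _} (ρ : α → α → ℝ) : Prop :=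
  ∃ X0 : Set α, X0.Countable ∧ (∀ e ∈ X0, IsFinitePoint ρ e) ∧
    ∀ x, ∃ u : ℕ → α, (∀ n, u n ∈ X0) ∧ IsCauchySeq ρ u ∧ IsYonedaLim ρ u x

/-- A quasi-metric on `X`. -/
structure QuasiMetric (X : Type _) : Type _ where
  d : X → X → ℝ
  nonneg : ∀ x y, 0 ≤ d x y
  triangle : ∀ x y z, d x z ≤ d x y + d y z
  eq_iff : ∀ x y, x = y ↔ d x y = 0 ∧ d y x = 0

/-- Formal balls over `X`. -/
abbrev FB (X : Type _) := X × ℝ≥0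

/-- Nonempty finite subsets of the space of formal balls. -/
def PFin (X : Type _) : Type _ := {F : Set (FB X) // F.Finite ∧ F.Nonempty}

namespace QuasiMetric

variable {X : Type _} (Q : QuasiMetric X)

def IsT1 : Prop := ∀ x y, Q.d x y = 0 → x = y

def Bounded : Prop := ∃ C : ℝ, ∀ x y, Q.d x y ≤ C

def ball (x : X) (ε : ℝ) : Set X := {y | Q.d x y < ε}

/-- The topology `τ_d` induced by the quasi-metric. -/
def tau : TopologicalSpace X :=
  TopologicalSpace.generateFrom {s | ∃ x ε, 0 < ε ∧ s = Q.ball x ε}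

def dstar (x y : X) : ℝ := max (Q.d x y) (Q.d y x)

def SeqYonedaComplete : Prop := SeqYonedaCompleteD Q.d

def SmythComplete : Prop := SmythCompleteD Q.d

/-- `K` is `d⁻¹`-precompact. -/
def dInvPrecompact (K : Set X) : Prop :=
  ∀ ε : ℝ, 0 < ε → ∃ F : Set X, F.Finite ∧ F ⊆ K ∧ ∀ k ∈ K, ∃ x ∈ F, Q.d k x < ε

/-- The nonempty compact subsets of `(X, τ_d)`. -/
def K0 : Set (Set X) := {K | K.Nonempty ∧ @IsCompact X Q.tau K}

noncomputable def dPtSet (x : X) (B : Set X) : ℝ := sInf {t | ∃ b ∈ B, t = Q.d x b}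

noncomputable def dSetPt (A : Set X) (y : X) : ℝ := sInf {t | ∃ a ∈ A, t = Q.d a y}

/-- The Hausdorff quasi-metric. -/
noncomputable def Hd (A B : Set X) : ℝ :=
  max (sSup {t | ∃ b ∈ B, t = Q.dSetPt A b}) (sSup {t | ∃ a ∈ A, t = Q.dPtSet a B})

/-- Order on formal balls: `(x,r) ⊑ (y,s)  ↔  d x y ≤ r - s`. -/
def ble (a b : FB X) : Prop := Q.d a.1 b.1 ≤ (a.2 : ℝ) - (b.2 : ℝ)

/-- Auxiliary relation: `(x,r) ≺ (y,s)  ↔  d x y < r - s`. -/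
def blt (a b : FB X) : Prop := Q.d a.1 b.1 < (a.2 : ℝ) - (b.2 : ℝ)

def iota (x : X) : FB X := (x, 0)

/-- The quasi-metric `q` on formal balls. -/
noncomputable def q (a b : FB X) : ℝ :=
  max (Q.d a.1 b.1) |(a.2 : ℝ) - (b.2 : ℝ)| + ((b.2 : ℝ) - (a.2 : ℝ))

/-- The Egli–Milner relation `≺_EM` on nonempty finite sets of formal balls. -/
def em (F G : PFin X) : Prop :=
  (∀ b ∈ G.1, ∃ a ∈ F.1, Q.blt a b) ∧ (∀ a ∈ F.1, ∃ b ∈ G.1, Q.blt a b)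

/-- The non-strict Egli–Milner relation `⊑_EM`. -/
def emLE (F G : PFin X) : Prop :=
  (∀ a ∈ F.1, ∃ b ∈ G.1, Q.ble a b) ∧ (∀ b ∈ G.1, ∃ a ∈ F.1, Q.ble a b)

/-- `rF = max { r : (x,r) ∈ F }`. -/
noncomputable def rF (F : PFin X) : ℝ := sSup {t | ∃ p ∈ F.1, t = (p.2 : ℝ)}

/-- `δ(F,G) = min {(r-s) - d x y : (x,r) ∈ F, (y,s) ∈ G, (x,r) ≺ (y,s)}`. -/
noncomputable def delta (F G : PFin X) : ℝ :=
  sInf {t | ∃ a ∈ F.1, ∃ b ∈ G.1, Q.blt a b ∧ t = ((a.2 : ℝ) - (b.2 : ℝ)) - Q.d a.1 b.1}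

/-- The Hausdorff quasi-metric `H_q` on `P_fin(BX)` induced by `q`. -/
noncomputable def Hq (F G : PFin X) : ℝ :=
  max (sSup {t | ∃ a ∈ F.1, t = sInf {s | ∃ b ∈ G.1, s = Q.q a b}})
      (sSup {t | ∃ b ∈ G.1, t = sInf {s | ∃ a ∈ F.1, s = Q.q a b}})

/-- ω-chains in `(P_fin(BX), ≺_EM)`; `c n` plays the role of `F_{n+1}`. -/
def Chain : Type _ := {c : ℕ → PFin X // ∀ n, Q.em (c n) (c (n + 1))}

def chainLE (c c' : Q.Chain) : Prop := ∀ n, ∃ m, Q.em (c.1 n) (c'.1 m)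

def chainEquiv (c c' : Q.Chain) : Prop := Q.chainLE c c' ∧ Q.chainLE c' c

lemma blt_trans {a b c : FB X} (h1 : Q.blt a b) (h2 : Q.blt b c) : Q.blt a c := by
  have h3 := Q.triangle a.1 b.1 c.1
  unfold blt at h1 h2 ⊢
  linarith

lemma em_trans {F G H : PFin X} (h1 : Q.em F G) (h2 : Q.em G H) : Q.em F H := by
  constructor
  · intro b hb
    obtain ⟨a, ha, hab⟩ := h2.1 b hb
    obtain ⟨a', ha', h'⟩ := h1.1 a ha
    exact ⟨a', ha', Q.blt_trans h' hab⟩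
  · intro a ha
    obtain ⟨b, hb, hab⟩ := h1.2 a ha
    obtain ⟨c, hc, hbc⟩ := h2.2 b hb
    exact ⟨c, hc, Q.blt_trans hab hbc⟩

lemma chainLE_refl (c : Q.Chain) : Q.chainLE c c := fun n => ⟨n + 1, c.2 n⟩

lemma chainLE_trans {a b c : Q.Chain} (h1 : Q.chainLE a b) (h2 : Q.chainLE b c) :
    Q.chainLE a c := by
  intro n
  obtain ⟨m, hm⟩ := h1 n
  obtain ⟨k, hk⟩ := h2 m
  exact ⟨k, Q.em_trans hm hk⟩

def chainSetoid : Setoid Q.Chain where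
  r := Q.chainEquiv
  iseqv := ⟨fun c => ⟨Q.chainLE_refl c, Q.chainLE_refl c⟩,
    fun h => ⟨h.2, h.1⟩,
    fun h1 h2 => ⟨Q.chainLE_trans h1.1 h2.1, Q.chainLE_trans h2.2 h1.2⟩⟩

/-- The ω-Plotkin domain `CBX`: equivalence classes of ω-chains in `(P_fin(BX), ≺_EM)`. -/
def CBX : Type _ := Quotient Q.chainSetoid

/-- The partial order of `CBX`. -/
def cbLE : Q.CBX → Q.CBX → Prop :=
  Quotient.lift₂ Q.chainLE (by
    intro a b a' b' ha hb
    have ha' : Q.chainEquiv a a' := ha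
    have hb' : Q.chainEquiv b b' := hb
    exact propext ⟨fun h => Q.chainLE_trans (Q.chainLE_trans ha'.2 h) hb'.1,
      fun h => Q.chainLE_trans (Q.chainLE_trans ha'.1 h) hb'.2⟩)

def chainWB (c c' : Q.Chain) : Prop := ∃ m, ∀ n, Q.em (c.1 n) (c'.1 m)

/-- The way-below relation of `CBX`. -/
def cbWB : Q.CBX → Q.CBX → Prop :=
  Quotient.lift₂ Q.chainWB (by
    intro a b a' b' ha hb
    have ha' : Q.chainEquiv a a' := ha
    have hb' : Q.chainEquiv b b' := hb
    apply propext
    constructor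
    · rintro ⟨m, hm⟩
      obtain ⟨k, hk⟩ := hb'.1 m
      refine ⟨k, fun n => ?_⟩
      obtain ⟨p, hp⟩ := ha'.2 n
      exact Q.em_trans hp (Q.em_trans (hm p) hk)
    · rintro ⟨m, hm⟩
      obtain ⟨k, hk⟩ := hb'.2 m
      refine ⟨k, fun n => ?_⟩
      obtain ⟨p, hp⟩ := ha'.1 n
      exact Q.em_trans hp (Q.em_trans (hm p) hk))

/-- The Scott topology of `CBX`, generated by the sets `↟I`. -/
def scottTop : TopologicalSpace Q.CBX :=
  TopologicalSpace.generateFrom {s | ∃ I : Q.CBX, s = {J | Q.cbWB I J}}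

def upSet (F : PFin X) : Set (FB X) := {b | ∃ a ∈ F.1, Q.ble a b}

/-- `I⁺ = ⋂_n ↑F_n` for a representing chain. -/
def Iplus (c : Q.Chain) : Set (FB X) := ⋂ n, Q.upSet (c.1 n)

noncomputable def IplusQ (I : Q.CBX) : Set (FB X) := Q.Iplus (Quotient.out I)

/-- `r̄ I = inf { rF : F occurs in some chain representing I }`. -/
noncomputable def rbar (I : Q.CBX) : ℝ :=
  sInf {t | ∃ c : Q.Chain, Quotient.mk Q.chainSetoid c = I ∧ ∃ n, t = rF (c.1 n)}

/-- `c` is a standard representation of `K`: `c n` (playing the role of `F_{n+1}`) is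
`{(x_i^j, 1/(n+1)) : 1 ≤ j ≤ n+1, 1 ≤ i ≤ m_j}` where the `x_i^j ∈ K` satisfy
`∀ y ∈ K, ∃ i, d (x_i^j) y < 1/(2 j²)`. -/
def IsStdRep (K : Set X) (c : Q.Chain) : Prop :=
  ∃ (m : ℕ → ℕ) (x : ℕ → ℕ → X),
    (∀ j i, 1 ≤ j → 1 ≤ i → i ≤ m j → x j i ∈ K) ∧
    (∀ j, 1 ≤ j → ∀ y ∈ K, ∃ i, 1 ≤ i ∧ i ≤ m j ∧ Q.d (x j i) y < 1 / (2 * (j : ℝ) ^ 2)) ∧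
    (∀ n : ℕ, (c.1 n).1 =
      {p : FB X | ∃ j i, 1 ≤ j ∧ j ≤ n + 1 ∧ 1 ≤ i ∧ i ≤ m j ∧
        p = (x j i, ((n : ℝ≥0) + 1)⁻¹)})

/-- `D` on representing chains: `sup_n inf_m H_q(F_n, G_m)`. -/
noncomputable def Dchain (c c' : Q.Chain) : ℝ :=
  sSup {t | ∃ n, t = sInf {s | ∃ m, s = Q.Hq (c.1 n) (c'.1 m)}}

/-- The quasi-metric `D` on `CBX`. -/
noncomputable def D (I J : Q.CBX) : ℝ := Q.Dchain (Quotient.out I) (Quotient.out J)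

/-- The topology induced by `D` on `CBX`. -/
def DTop : TopologicalSpace Q.CBX :=
  TopologicalSpace.generateFrom
    {s | ∃ (I : Q.CBX) (ε : ℝ), 0 < ε ∧ s = {J | Q.D I J < ε}}

/-- The hyperspace `K_0(X)` as a type. -/
def K0T : Type _ := {K : Set X // K.Nonempty ∧ @IsCompact X Q.tau K}

/-- The Vietoris topology on `K_0(X)`. -/
def vietoris : TopologicalSpace Q.K0T :=
  TopologicalSpace.generateFrom
    ({s | ∃ V : Set X, @IsOpen X Q.tau V ∧ s = {K : Q.K0T | (K.1 ∩ V).Nonempty}} ∪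
     {s | ∃ V : Set X, @IsOpen X Q.tau V ∧ s = {K : Q.K0T | K.1 ⊆ V}})

/-- The topology of the Hausdorff quasi-metric on `K_0(X)`. -/
def hdTop : TopologicalSpace Q.K0T :=
  TopologicalSpace.generateFrom
    {s | ∃ (K : Q.K0T) (ε : ℝ), 0 < ε ∧ s = {L : Q.K0T | Q.Hd K.1 L.1 < ε}}

/-- Round ideals of `(P_fin(BX), ≺_EM)`. -/
def IsRoundIdeal (I : Set (PFin X)) : Prop :=
  I.Nonempty ∧ (∀ F G : PFin X, Q.em F G → G ∈ I → F ∈ I) ∧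
  (∀ F ∈ I, ∀ G ∈ I, ∃ H ∈ I, Q.em F H ∧ Q.em G H)

end QuasiMetric

/-! The `n`-th set of a standard representation of `K` consists of balls of radius `1/(n+1)`
whose centres `p` lie in `K` and approximate every `y ∈ K` from the left, `d(p, y) < 1/(2(n+1))`.
Up to these radii, `H_q(F_n, G_m)` is therefore `H_d(K₁, K₂)`, except that the nets give no
control of `d(y, p)`. That direction comes from compactness: if points `u n` of a `τ_d`-compact set
satisfy `d(u n, y) → 0`, then a cluster point `z` has `d(z, y) = 0`, so `z = y` by T1 and
`d(y, u n)` is frequently small. Since a centre of a standard representation persists in all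
later stages, one such centre serves for all large `m`. -/

open Filter Topology

lemma setOf_exists_mem_eq_image {α β : Type*} (S : Set α) (f : α → β) :
    {t | ∃ a ∈ S, t = f a} = f '' S := by
  ext t
  simp [eq_comm]

lemma Set.Finite.sSup_setOf_le_iff {α : Type*} {S : Set α} (hS : S.Finite) (hne : S.Nonempty)
    (f : α → ℝ) (B : ℝ) : sSup {t | ∃ a ∈ S, t = f a} ≤ B ↔ ∀ a ∈ S, f a ≤ B := by
  rw [setOf_exists_mem_eq_image, csSup_le_iff (hS.image f).bddAbove (hne.image f),
    Set.forall_mem_image]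

lemma Set.Finite.sInf_setOf_le_iff {α : Type*} {S : Set α} (hS : S.Finite) (hne : S.Nonempty)
    (f : α → ℝ) (B : ℝ) : sInf {t | ∃ a ∈ S, t = f a} ≤ B ↔ ∃ a ∈ S, f a ≤ B := by
  rw [setOf_exists_mem_eq_image]
  constructor
  · intro h
    obtain ⟨a, ha, hfa⟩ := (hne.image f).csInf_mem (hS.image f)
    exact ⟨a, ha, hfa ▸ h⟩
  · rintro ⟨a, ha, hfa⟩
    exact csInf_le_of_le (hS.image f).bddBelow ⟨a, ha, rfl⟩ hfa

namespace QuasiMetric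

variable {X : Type _} (Q : QuasiMetric X)

lemma d_self (x : X) : Q.d x x = 0 := ((Q.eq_iff x x).1 rfl).1

lemma ble_of_blt {a b : FB X} (h : Q.blt a b) : Q.ble a b := le_of_lt h

lemma emLE_of_em {F G : PFin X} (h : Q.em F G) : Q.emLE F G :=
  ⟨fun a ha => (h.2 a ha).imp fun _ hb => ⟨hb.1, Q.ble_of_blt hb.2⟩,
   fun b hb => (h.1 b hb).imp fun _ ha => ⟨ha.1, Q.ble_of_blt ha.2⟩⟩

lemma d_add_sub_le_q (a b : FB X) : Q.d a.1 b.1 + ((b.2 : ℝ) - a.2) ≤ Q.q a b :=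
  add_le_add_left (le_max_left _ _) _

lemma q_nonneg (a b : FB X) : 0 ≤ Q.q a b := by
  have := le_max_right (Q.d a.1 b.1) |(a.2 : ℝ) - b.2|
  have := le_abs_self ((a.2 : ℝ) - b.2)
  unfold q
  linarith

lemma q_le_d_add (a b : FB X) : Q.q a b ≤ Q.d a.1 b.1 + 2 * b.2 := by
  have := Q.nonneg a.1 b.1
  have := a.2.2
  have : max (Q.d a.1 b.1) |(a.2 : ℝ) - b.2| ≤ Q.d a.1 b.1 + |(a.2 : ℝ) - b.2| :=
    max_le (by linarith [abs_nonneg ((a.2 : ℝ) - b.2)]) (by linarith)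
  unfold q
  cases abs_cases ((a.2 : ℝ) - b.2) <;> linarith

lemma q_of_le {a b : FB X} (h : b.2 ≤ a.2) :
    Q.q a b = max (Q.d a.1 b.1 + ((b.2 : ℝ) - a.2)) 0 := by
  have h' : (b.2 : ℝ) ≤ a.2 := h
  rw [q, abs_of_nonneg (sub_nonneg.2 h'), ← max_add_add_right]
  ring_nf

lemma q_mono_left {a a' : FB X} (h : Q.ble a a') (b : FB X) : Q.q a b ≤ Q.q a' b := by
  have := Q.triangle a.1 a'.1 b.1
  have := abs_sub_le (a.2 : ℝ) a'.2 b.2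
  have : |(a.2 : ℝ) - a'.2| = a.2 - a'.2 := abs_of_nonneg (le_trans (Q.nonneg _ _) h)
  have := le_max_left (Q.d a'.1 b.1) |(a'.2 : ℝ) - b.2|
  have := le_max_right (Q.d a'.1 b.1) |(a'.2 : ℝ) - b.2|
  unfold ble at h
  have : max (Q.d a.1 b.1) |(a.2 : ℝ) - b.2| ≤
      max (Q.d a'.1 b.1) |(a'.2 : ℝ) - b.2| + (a.2 - a'.2) :=
    max_le (by linarith) (by linarith)
  unfold q
  linarith

lemma q_mono_right {b b' : FB X} (h : Q.ble b b') (a : FB X) : Q.q a b' ≤ Q.q a b := by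
  have := Q.triangle a.1 b.1 b'.1
  have := abs_sub_le (a.2 : ℝ) b.2 b'.2
  have : |(b.2 : ℝ) - b'.2| = b.2 - b'.2 := abs_of_nonneg (le_trans (Q.nonneg _ _) h)
  have := le_max_left (Q.d a.1 b.1) |(a.2 : ℝ) - b.2|
  have := le_max_right (Q.d a.1 b.1) |(a.2 : ℝ) - b.2|
  unfold ble at h
  have : max (Q.d a.1 b'.1) |(a.2 : ℝ) - b'.2| ≤
      max (Q.d a.1 b.1) |(a.2 : ℝ) - b.2| + (b.2 - b'.2) :=
    max_le (by linarith) (by linarith)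
  unfold q
  linarith

lemma Hq_le_iff (F G : PFin X) (B : ℝ) : Q.Hq F G ≤ B ↔
    (∀ a ∈ F.1, ∃ b ∈ G.1, Q.q a b ≤ B) ∧ (∀ b ∈ G.1, ∃ a ∈ F.1, Q.q a b ≤ B) := by
  simp only [Hq, max_le_iff, F.2.1.sSup_setOf_le_iff F.2.2, G.2.1.sSup_setOf_le_iff G.2.2,
    G.2.1.sInf_setOf_le_iff G.2.2, F.2.1.sInf_setOf_le_iff F.2.2]

lemma exists_q_le_Hq_left {F : PFin X} {a : FB X} (ha : a ∈ F.1) (G : PFin X) :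
    ∃ b ∈ G.1, Q.q a b ≤ Q.Hq F G :=
  ((Q.Hq_le_iff F G _).1 le_rfl).1 a ha

lemma exists_q_le_Hq_right (F : PFin X) {G : PFin X} {b : FB X} (hb : b ∈ G.1) :
    ∃ a ∈ F.1, Q.q a b ≤ Q.Hq F G :=
  ((Q.Hq_le_iff F G _).1 le_rfl).2 b hb

lemma le_Hq_left {F G : PFin X} {a : FB X} {B : ℝ} (ha : a ∈ F.1)
    (h : ∀ b ∈ G.1, B ≤ Q.q a b) : B ≤ Q.Hq F G :=
  let ⟨b, hb, hq⟩ := Q.exists_q_le_Hq_left ha G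
  (h b hb).trans hq

lemma le_Hq_right {F G : PFin X} {b : FB X} {B : ℝ} (hb : b ∈ G.1)
    (h : ∀ a ∈ F.1, B ≤ Q.q a b) : B ≤ Q.Hq F G :=
  let ⟨a, ha, hq⟩ := Q.exists_q_le_Hq_right F hb
  (h a ha).trans hq

lemma Hq_nonneg (F G : PFin X) : 0 ≤ Q.Hq F G :=
  let ⟨_, ha⟩ := F.2.2
  Q.le_Hq_left ha fun b _ => Q.q_nonneg _ b

lemma Hq_le_add_two_mul {F G : PFin X} {C R : ℝ} (hC : ∀ x y, Q.d x y ≤ C)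
    (hR : ∀ b ∈ G.1, (b.2 : ℝ) ≤ R) : Q.Hq F G ≤ C + 2 * R := by
  have hq : ∀ a, ∀ b ∈ G.1, Q.q a b ≤ C + 2 * R := fun a b hb => by
    linarith [Q.q_le_d_add a b, hC a.1 b.1, hR b hb]
  obtain ⟨a₀, ha₀⟩ := F.2.2
  obtain ⟨b₀, hb₀⟩ := G.2.2
  exact (Q.Hq_le_iff F G _).2 ⟨fun a _ => ⟨b₀, hb₀, hq a b₀ hb₀⟩, fun b hb => ⟨a₀, ha₀, hq a₀ b hb⟩⟩

lemma Hq_mono_left {F F' : PFin X} (h : Q.emLE F F') (G : PFin X) : Q.Hq F G ≤ Q.Hq F' G := by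
  refine (Q.Hq_le_iff F G _).2 ⟨fun a ha => ?_, fun b hb => ?_⟩
  · obtain ⟨a', ha', haa'⟩ := h.1 a ha
    obtain ⟨b, hb, hq⟩ := Q.exists_q_le_Hq_left ha' G
    exact ⟨b, hb, (Q.q_mono_left haa' b).trans hq⟩
  · obtain ⟨a', ha', hq⟩ := Q.exists_q_le_Hq_right F' hb
    obtain ⟨a, ha, haa'⟩ := h.2 a' ha'
    exact ⟨a, ha, (Q.q_mono_left haa' b).trans hq⟩

lemma Hq_mono_right (F : PFin X) {G G' : PFin X} (h : Q.emLE G G') : Q.Hq F G' ≤ Q.Hq F G := by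
  refine (Q.Hq_le_iff F G' _).2 ⟨fun a ha => ?_, fun b' hb' => ?_⟩
  · obtain ⟨b, hb, hq⟩ := Q.exists_q_le_Hq_left ha G
    obtain ⟨b', hb', hbb'⟩ := h.1 b hb
    exact ⟨b', hb', (Q.q_mono_right hbb' a).trans hq⟩
  · obtain ⟨b, hb, hbb'⟩ := h.2 b' hb'
    obtain ⟨a, ha, hq⟩ := Q.exists_q_le_Hq_right F hb
    exact ⟨a, ha, (Q.q_mono_right hbb' a).trans hq⟩

lemma Dchain_eq_iSup_iInf (c c' : Q.Chain) :
    Q.Dchain c c' = ⨆ n, ⨅ m, Q.Hq (c.1 n) (c'.1 m) := by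
  simp only [Dchain, iSup, iInf, Set.range, eq_comm]

lemma bddBelow_range_Hq (F : PFin X) (c' : Q.Chain) :
    BddBelow (Set.range fun m => Q.Hq F (c'.1 m)) :=
  ⟨0, by rintro _ ⟨m, rfl⟩; exact Q.Hq_nonneg _ _⟩

lemma bddAbove_range_iInf_Hq (hB : Q.Bounded) (c c' : Q.Chain) :
    BddAbove (Set.range fun n => ⨅ m, Q.Hq (c.1 n) (c'.1 m)) := by
  obtain ⟨C, hC⟩ := hB
  obtain ⟨R, hR⟩ := ((c'.1 0).2.1.image fun b : FB X => (b.2 : ℝ)).bddAbove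
  refine ⟨C + 2 * R, ?_⟩
  rintro _ ⟨n, rfl⟩
  exact ciInf_le_of_le (Q.bddBelow_range_Hq _ c') 0
    (Q.Hq_le_add_two_mul hC fun b hb => hR ⟨b, hb, rfl⟩)

lemma Dchain_le_of {c c' : Q.Chain} {B : ℝ}
    (h : ∀ n, ∀ ε > 0, ∃ m, Q.Hq (c.1 n) (c'.1 m) ≤ B + ε) : Q.Dchain c c' ≤ B := by
  rw [Dchain_eq_iSup_iInf]
  refine ciSup_le fun n => le_of_forall_pos_le_add fun ε hε => ?_
  obtain ⟨m, hm⟩ := h n ε hε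
  exact ciInf_le_of_le (Q.bddBelow_range_Hq _ c') m hm

lemma le_Dchain_of (hB : Q.Bounded) {c c' : Q.Chain} {B : ℝ}
    (h : ∀ ε > 0, ∃ n, ∀ m, B - ε ≤ Q.Hq (c.1 n) (c'.1 m)) : B ≤ Q.Dchain c c' := by
  rw [Dchain_eq_iSup_iInf]
  refine le_of_forall_pos_le_add fun ε hε => ?_
  obtain ⟨n, hn⟩ := h ε hε
  have := le_ciSup (Q.bddAbove_range_iInf_Hq hB c c') n
  have := le_ciInf hn
  linarith

lemma Dchain_mono (hB : Q.Bounded) {c ct c' ct' : Q.Chain} (h : Q.chainLE c ct)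
    (h' : Q.chainLE ct' c') : Q.Dchain c c' ≤ Q.Dchain ct ct' := by
  rw [Q.Dchain_eq_iSup_iInf c, Q.Dchain_eq_iSup_iInf ct]
  refine ciSup_le fun n => ?_
  obtain ⟨k, hk⟩ := h n
  refine le_trans (le_ciInf fun m' => ?_) (le_ciSup (Q.bddAbove_range_iInf_Hq hB ct ct') k)
  obtain ⟨m, hm⟩ := h' m'
  exact ciInf_le_of_le (Q.bddBelow_range_Hq _ c') m
    ((Q.Hq_mono_right _ (Q.emLE_of_em hm)).trans (Q.Hq_mono_left (Q.emLE_of_em hk) _))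

lemma D_mk (hB : Q.Bounded) (c c' : Q.Chain) :
    Q.D (Quotient.mk Q.chainSetoid c) (Quotient.mk Q.chainSetoid c') = Q.Dchain c c' := by
  have h : Q.chainEquiv (Quotient.mk Q.chainSetoid c).out c :=
    Quotient.exact (Quotient.out_eq (Quotient.mk Q.chainSetoid c))
  have h' : Q.chainEquiv (Quotient.mk Q.chainSetoid c').out c' :=
    Quotient.exact (Quotient.out_eq (Quotient.mk Q.chainSetoid c'))
  exact le_antisymm (Q.Dchain_mono hB h.1 h'.2) (Q.Dchain_mono hB h.2 h'.1)

section Hausdorff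

variable {A B : Set X}

lemma dPtSet_le {x b : X} (hb : b ∈ B) : Q.dPtSet x B ≤ Q.d x b :=
  csInf_le ⟨0, by rintro _ ⟨b, -, rfl⟩; exact Q.nonneg _ _⟩ ⟨b, hb, rfl⟩

lemma dSetPt_le {a y : X} (ha : a ∈ A) : Q.dSetPt A y ≤ Q.d a y :=
  csInf_le ⟨0, by rintro _ ⟨a, -, rfl⟩; exact Q.nonneg _ _⟩ ⟨a, ha, rfl⟩

lemma dPtSet_nonneg (x : X) (B : Set X) : 0 ≤ Q.dPtSet x B :=
  Real.sInf_nonneg (by rintro _ ⟨b, -, rfl⟩; exact Q.nonneg _ _)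

lemma dSetPt_nonneg (A : Set X) (y : X) : 0 ≤ Q.dSetPt A y :=
  Real.sInf_nonneg (by rintro _ ⟨a, -, rfl⟩; exact Q.nonneg _ _)

lemma exists_d_lt_dPtSet_add (hB : B.Nonempty) (x : X) {ε : ℝ} (hε : 0 < ε) :
    ∃ b ∈ B, Q.d x b < Q.dPtSet x B + ε := by
  obtain ⟨b₀, hb₀⟩ := hB
  obtain ⟨_, ⟨b, hb, rfl⟩, hlt⟩ :=
    exists_lt_of_csInf_lt (by exact ⟨_, b₀, hb₀, rfl⟩) (lt_add_of_pos_right (Q.dPtSet x B) hε)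
  exact ⟨b, hb, hlt⟩

lemma exists_d_lt_dSetPt_add (hA : A.Nonempty) (y : X) {ε : ℝ} (hε : 0 < ε) :
    ∃ a ∈ A, Q.d a y < Q.dSetPt A y + ε := by
  obtain ⟨a₀, ha₀⟩ := hA
  obtain ⟨_, ⟨a, ha, rfl⟩, hlt⟩ :=
    exists_lt_of_csInf_lt (by exact ⟨_, a₀, ha₀, rfl⟩) (lt_add_of_pos_right (Q.dSetPt A y) hε)
  exact ⟨a, ha, hlt⟩

lemma dPtSet_le_d_add (hB : B.Nonempty) (x y : X) : Q.dPtSet x B ≤ Q.d x y + Q.dPtSet y B :=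
  le_of_forall_pos_le_add fun ε hε => by
    obtain ⟨b, hb, hyb⟩ := Q.exists_d_lt_dPtSet_add hB y hε
    linarith [Q.dPtSet_le (x := x) hb, Q.triangle x y b]

lemma dSetPt_le_add_d (hA : A.Nonempty) (y z : X) : Q.dSetPt A z ≤ Q.dSetPt A y + Q.d y z :=
  le_of_forall_pos_le_add fun ε hε => by
    obtain ⟨a, ha, hay⟩ := Q.exists_d_lt_dSetPt_add hA y hε
    linarith [Q.dSetPt_le (y := z) ha, Q.triangle a y z]

lemma dSetPt_le_Hd (hQ : Q.Bounded) (hA : A.Nonempty) {b : X} (hb : b ∈ B) :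
    Q.dSetPt A b ≤ Q.Hd A B := by
  obtain ⟨C, hC⟩ := hQ
  obtain ⟨a, ha⟩ := hA
  refine le_max_of_le_left (le_csSup ⟨C, ?_⟩ ⟨b, hb, rfl⟩)
  rintro _ ⟨b', -, rfl⟩
  exact (Q.dSetPt_le ha).trans (hC _ _)

lemma dPtSet_le_Hd (hQ : Q.Bounded) (hB : B.Nonempty) {a : X} (ha : a ∈ A) :
    Q.dPtSet a B ≤ Q.Hd A B := by
  obtain ⟨C, hC⟩ := hQ
  obtain ⟨b, hb⟩ := hB
  refine le_max_of_le_right (le_csSup ⟨C, ?_⟩ ⟨a, ha, rfl⟩)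
  rintro _ ⟨a', -, rfl⟩
  exact (Q.dPtSet_le hb).trans (hC _ _)

lemma exists_lt_of_lt_Hd (hA : A.Nonempty) (hB : B.Nonempty) {t : ℝ} (h : t < Q.Hd A B) :
    (∃ b ∈ B, t < Q.dSetPt A b) ∨ (∃ a ∈ A, t < Q.dPtSet a B) := by
  obtain ⟨a₀, ha₀⟩ := hA
  obtain ⟨b₀, hb₀⟩ := hB
  rcases lt_max_iff.1 h with h | h
  · obtain ⟨_, ⟨b, hb, rfl⟩, hlt⟩ := exists_lt_of_lt_csSup (by exact ⟨_, b₀, hb₀, rfl⟩) h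
    exact .inl ⟨b, hb, hlt⟩
  · obtain ⟨_, ⟨a, ha, rfl⟩, hlt⟩ := exists_lt_of_lt_csSup (by exact ⟨_, a₀, ha₀, rfl⟩) h
    exact .inr ⟨a, ha, hlt⟩

end Hausdorff

lemma isOpen_ball (x : X) {ε : ℝ} (hε : 0 < ε) : IsOpen[Q.tau] (Q.ball x ε) :=
  TopologicalSpace.GenerateOpen.basic _ ⟨x, ε, hε, rfl⟩

lemma mem_ball_self (x : X) {ε : ℝ} (hε : 0 < ε) : x ∈ Q.ball x ε := by
  show Q.d x x < ε
  rwa [Q.d_self]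

lemma frequently_d_lt_of_eventually_d_lt (hT1 : Q.IsT1) {K : Set X}
    (hK : @IsCompact X Q.tau K) {u : ℕ → X} (hu : ∀ n, u n ∈ K) {y : X}
    (hy : ∀ ε > 0, ∀ᶠ n in atTop, Q.d (u n) y < ε) {ε : ℝ} (hε : 0 < ε) :
    ∃ᶠ n in atTop, Q.d y (u n) < ε := by
  let _ := Q.tau
  obtain ⟨z, -, hz⟩ := hK.exists_mapClusterPt_of_frequently (l := atTop) (Frequently.of_forall hu)
  have hz' : ∀ δ > 0, ∃ᶠ n in atTop, Q.d z (u n) < δ := fun δ hδ =>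
    mapClusterPt_iff_frequently.1 hz _ ((Q.isOpen_ball z hδ).mem_nhds (Q.mem_ball_self z hδ))
  have hzy : z = y := by
    refine hT1 z y (le_antisymm (le_of_forall_pos_lt_add fun δ hδ => ?_) (Q.nonneg z y))
    obtain ⟨n, hzn, hny⟩ :=
      ((hz' (δ / 2) (half_pos hδ)).and_eventually (hy (δ / 2) (half_pos hδ))).exists
    linarith [Q.triangle z (u n) y]
  exact hzy ▸ hz' ε hε

end QuasiMetric

noncomputable def stdRadius (n : ℕ) : ℝ := 1 / ((n : ℝ) + 1)

lemma stdRadius_pos (n : ℕ) : 0 < stdRadius n := by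
  unfold stdRadius
  positivity

lemma tendsto_stdRadius_atTop : Tendsto stdRadius atTop (𝓝 0) :=
  tendsto_one_div_add_atTop_nhds_zero_nat

lemma stdRadius_le_half {n m : ℕ} (h : 2 * n + 1 ≤ m) : stdRadius m ≤ stdRadius n / 2 := by
  have h' : 2 * ((n : ℝ) + 1) ≤ (m : ℝ) + 1 := by exact_mod_cast (by omega : 2 * (n + 1) ≤ m + 1)
  unfold stdRadius
  rw [div_div, mul_comm]
  gcongr

lemma coe_stdRadius (n : ℕ) : ((((n : ℝ≥0) + 1)⁻¹ : ℝ≥0) : ℝ) = stdRadius n := by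
  simp [stdRadius]

namespace QuasiMetric.IsStdRep

variable {X : Type _} {Q : QuasiMetric X} {K : Set X} {c : Q.Chain}

lemma mem (hc : Q.IsStdRep K c) {n : ℕ} {p : FB X} (hp : p ∈ (c.1 n).1) :
    p.1 ∈ K ∧ (p.2 : ℝ) = stdRadius n := by
  obtain ⟨_, x, hxK, -, hset⟩ := hc
  rw [hset n] at hp
  obtain ⟨j, i, hj, -, hi, him, rfl⟩ := hp
  exact ⟨hxK j i hj hi him, coe_stdRadius n⟩

lemma mk_mem_of_le (hc : Q.IsStdRep K c) {m₀ m : ℕ} (hm : m₀ ≤ m) {p : FB X}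
    (hp : p ∈ (c.1 m₀).1) : (p.1, ((m : ℝ≥0) + 1)⁻¹) ∈ (c.1 m).1 := by
  obtain ⟨_, _, -, -, hset⟩ := hc
  rw [hset m₀] at hp
  obtain ⟨j, i, hj, hjm, hi, him, rfl⟩ := hp
  rw [hset m]
  exact ⟨j, i, hj, by omega, hi, him, rfl⟩

lemma exists_d_lt (hc : Q.IsStdRep K c) (n : ℕ) {y : X} (hy : y ∈ K) :
    ∃ p ∈ (c.1 n).1, Q.d p.1 y < stdRadius n / 2 := by
  obtain ⟨_, x, -, hnet, hset⟩ := hc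
  obtain ⟨i, hi, him, hlt⟩ := hnet (n + 1) (by omega) y hy
  refine ⟨(x (n + 1) i, ((n : ℝ≥0) + 1)⁻¹), ?_, hlt.trans_le ?_⟩
  · rw [hset n]
    exact ⟨n + 1, i, by omega, le_rfl, hi, him, rfl⟩
  · have h1 : (1 : ℝ) ≤ n + 1 := by linarith [(n.cast_nonneg : (0 : ℝ) ≤ n)]
    rw [stdRadius, div_div]
    push_cast
    gcongr 1 / ?_
    nlinarith

lemma frequently_exists_d_lt (hc : Q.IsStdRep K c) (hT1 : Q.IsT1) (hK : @IsCompact X Q.tau K)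
    {y : X} (hy : y ∈ K) {ε : ℝ} (hε : 0 < ε) :
    ∃ᶠ n in atTop, ∃ p ∈ (c.1 n).1, Q.d y p.1 < ε := by
  choose p hp hpy using fun n => hc.exists_d_lt n hy
  have hconv : ∀ δ > 0, ∀ᶠ n in atTop, Q.d (p n).1 y < δ := fun δ hδ =>
    (tendsto_stdRadius_atTop.eventually (gt_mem_nhds hδ)).mono fun n hn =>
      (hpy n).trans (by linarith [stdRadius_pos n])
  exact (Q.frequently_d_lt_of_eventually_d_lt hT1 hK (fun n => (hc.mem (hp n)).1) hconv hε).mono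
    fun n hn => ⟨p n, hp n, hn⟩

lemma eventually_exists_d_lt_dPtSet_add (hc : Q.IsStdRep K c) (hT1 : Q.IsT1)
    (hK : K ∈ Q.K0) (x : X) {ε : ℝ} (hε : 0 < ε) :
    ∀ᶠ m in atTop, ∃ p ∈ (c.1 m).1, Q.d x p.1 < Q.dPtSet x K + ε := by
  obtain ⟨y, hy, hxy⟩ := Q.exists_d_lt_dPtSet_add hK.1 x (half_pos hε)
  obtain ⟨m₀, p, hp, hyp⟩ := (hc.frequently_exists_d_lt hT1 hK.2 hy (half_pos hε)).exists
  filter_upwards [eventually_ge_atTop m₀] with m hm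
  exact ⟨_, hc.mk_mem_of_le hm hp, by linarith [Q.triangle x y p.1]⟩

end QuasiMetric.IsStdRep

namespace QuasiMetric

variable {X : Type _} (Q : QuasiMetric X) {K₁ K₂ : Set X} {c₁ c₂ : Q.Chain}

lemma eventually_Hq_le_Hd_add (hT1 : Q.IsT1) (hQ : Q.Bounded) (hK₁ : K₁.Nonempty)
    (hK₂ : K₂ ∈ Q.K0) (hc₁ : Q.IsStdRep K₁ c₁) (hc₂ : Q.IsStdRep K₂ c₂) (n : ℕ) {ε : ℝ}
    (hε : 0 < ε) : ∀ᶠ m in atTop, Q.Hq (c₁.1 n) (c₂.1 m) ≤ Q.Hd K₁ K₂ + ε := by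
  have hnear : ∀ᶠ m in atTop, ∀ a ∈ (c₁.1 n).1,
      ∃ p ∈ (c₂.1 m).1, Q.d a.1 p.1 < Q.dPtSet a.1 K₂ + ε :=
    (c₁.1 n).2.1.eventually_all.2 fun a _ => hc₂.eventually_exists_d_lt_dPtSet_add hT1 hK₂ a.1 hε
  filter_upwards [hnear, eventually_ge_atTop (2 * n + 1)] with m hnear hm
  -- the drop in radius from stage `n` to stage `m` absorbs the error `stdRadius n / 2` of `c₁ n`
  have hr : stdRadius m ≤ stdRadius n / 2 := stdRadius_le_half hm
  have := stdRadius_pos m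
  refine (Q.Hq_le_iff _ _ _).2 ⟨fun a ha => ?_, fun b hb => ?_⟩
  · obtain ⟨haK, ha2⟩ := hc₁.mem ha
    obtain ⟨p, hp, hap⟩ := hnear a ha
    obtain ⟨-, hp2⟩ := hc₂.mem hp
    refine ⟨p, hp, ?_⟩
    rw [Q.q_of_le (NNReal.coe_le_coe.1 (by linarith))]
    have := Q.dPtSet_le_Hd hQ hK₂.1 haK
    have := Q.dPtSet_nonneg a.1 K₂
    exact max_le (by linarith) (by linarith)
  · obtain ⟨hbK, hb2⟩ := hc₂.mem hb
    obtain ⟨y, hy, hyb⟩ := Q.exists_d_lt_dSetPt_add hK₁ b.1 hε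
    obtain ⟨p, hp, hpy⟩ := hc₁.exists_d_lt n hy
    obtain ⟨-, hp2⟩ := hc₁.mem hp
    refine ⟨p, hp, ?_⟩
    rw [Q.q_of_le (NNReal.coe_le_coe.1 (by linarith))]
    have := Q.dSetPt_le_Hd hQ hK₁ hbK
    have := Q.dSetPt_nonneg K₁ b.1
    have := Q.triangle p.1 y b.1
    exact max_le (by linarith) (by linarith)

lemma exists_forall_dSetPt_sub_le_Hq (hK₁ : K₁.Nonempty) (hc₁ : Q.IsStdRep K₁ c₁)
    (hc₂ : Q.IsStdRep K₂ c₂) {y : X} (hy : y ∈ K₂) {ε : ℝ} (hε : 0 < ε) :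
    ∃ n, ∀ m, Q.dSetPt K₁ y - ε ≤ Q.Hq (c₁.1 n) (c₂.1 m) := by
  obtain ⟨n, hn⟩ := (tendsto_stdRadius_atTop.eventually (gt_mem_nhds hε)).exists
  refine ⟨n, fun m => ?_⟩
  obtain ⟨p, hp, hpy⟩ := hc₂.exists_d_lt m hy
  obtain ⟨-, hp2⟩ := hc₂.mem hp
  refine Q.le_Hq_right hp fun a ha => ?_
  obtain ⟨haK, ha2⟩ := hc₁.mem ha
  have := Q.d_add_sub_le_q a p
  have := Q.dSetPt_le (y := p.1) haK
  have := Q.dSetPt_le_add_d hK₁ p.1 y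
  have := stdRadius_pos m
  linarith

lemma exists_forall_dPtSet_sub_le_Hq (hT1 : Q.IsT1) (hK₁ : @IsCompact X Q.tau K₁)
    (hK₂ : K₂.Nonempty) (hc₁ : Q.IsStdRep K₁ c₁) (hc₂ : Q.IsStdRep K₂ c₂) {x : X} (hx : x ∈ K₁)
    {ε : ℝ} (hε : 0 < ε) : ∃ n, ∀ m, Q.dPtSet x K₂ - ε ≤ Q.Hq (c₁.1 n) (c₂.1 m) := by
  obtain ⟨n, ⟨p, hp, hxp⟩, hn⟩ :=
    ((hc₁.frequently_exists_d_lt hT1 hK₁ hx (half_pos hε)).and_eventually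
      (tendsto_stdRadius_atTop.eventually (gt_mem_nhds (half_pos hε)))).exists
  refine ⟨n, fun m => Q.le_Hq_left hp fun b hb => ?_⟩
  obtain ⟨-, hp2⟩ := hc₁.mem hp
  obtain ⟨hbK, hb2⟩ := hc₂.mem hb
  have := Q.d_add_sub_le_q p b
  have := Q.dPtSet_le (x := p.1) hbK
  have := Q.dPtSet_le_d_add hK₂ x p.1
  have := stdRadius_pos m
  linarith

lemma exists_forall_Hd_sub_le_Hq (hT1 : Q.IsT1) (hK₁ : K₁ ∈ Q.K0) (hK₂ : K₂.Nonempty)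
    (hc₁ : Q.IsStdRep K₁ c₁) (hc₂ : Q.IsStdRep K₂ c₂) {ε : ℝ} (hε : 0 < ε) :
    ∃ n, ∀ m, Q.Hd K₁ K₂ - ε ≤ Q.Hq (c₁.1 n) (c₂.1 m) := by
  rcases Q.exists_lt_of_lt_Hd hK₁.1 hK₂ (sub_lt_self _ (half_pos hε)) with
    ⟨y, hy, hlt⟩ | ⟨x, hx, hlt⟩
  · obtain ⟨n, hn⟩ := Q.exists_forall_dSetPt_sub_le_Hq hK₁.1 hc₁ hc₂ hy (half_pos hε)
    exact ⟨n, fun m => by linarith [hn m]⟩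
  · obtain ⟨n, hn⟩ := Q.exists_forall_dPtSet_sub_le_Hq hT1 hK₁.2 hK₂ hc₁ hc₂ hx (half_pos hε)
    exact ⟨n, fun m => by linarith [hn m]⟩

end QuasiMetric

theorem stmt16_general {X : Type} (Q : QuasiMetric X) (hT1 : Q.IsT1) (hB : Q.Bounded)
    (K₁ K₂ : Set X) (h1 : K₁ ∈ Q.K0) (h2 : K₂ ∈ Q.K0)
    (c₁ c₂ : Q.Chain) (hc₁ : Q.IsStdRep K₁ c₁) (hc₂ : Q.IsStdRep K₂ c₂) :
    Q.D (Quotient.mk Q.chainSetoid c₁) (Quotient.mk Q.chainSetoid c₂) = Q.Hd K₁ K₂ := by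
  rw [Q.D_mk hB]
  refine le_antisymm (Q.Dchain_le_of fun n ε hε => ?_) (Q.le_Dchain_of hB fun ε hε => ?_)
  · exact (Q.eventually_Hq_le_Hd_add hT1 hB h1.1 h2 hc₁ hc₂ n hε).exists
  · exact Q.exists_forall_Hd_sub_le_Hq hT1 h1 h2.1 hc₁ hc₂ hε

/-- `φ(K) = K*` is an isometry: `D(K₁*, K₂*) = H_d(K₁, K₂)`. -/
theorem stmt16 {X : Type} (Q : QuasiMetric X) (hT1 : Q.IsT1) (hB : Q.Bounded)
    (hY : Q.SeqYonedaComplete) (K₁ K₂ : Set X) (h1 : K₁ ∈ Q.K0) (h2 : K₂ ∈ Q.K0)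
    (c₁ c₂ : Q.Chain) (hc₁ : Q.IsStdRep K₁ c₁) (hc₂ : Q.IsStdRep K₂ c₂) :
    Q.D (Quotient.mk Q.chainSetoid c₁) (Quotient.mk Q.chainSetoid c₂) = Q.Hd K₁ K₂ :=
  stmt16_general Q hT1 hB K₁ K₂ h1 h2 c₁ c₂ hc₁ hc₂
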